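/- arXiv:2203.11941 — 3 statements merged into one kernel-verified Lean document; each statement's English description precedes it below -/
import Mathlib

section
/- If a permutation mass function M on PES(Θ) with |Θ| = N satisfies M(A_{ij}) = (F(i)-1)/K(N) for all permutation events A_{ij} of length i ≥ 1, where K(N) = ∑_{i=1}^{N} P(N,i)(F(i)-1), then the RPS entropy H_RPS(M) = -∑_{i=1}^{N} ∑_{j=1}^{P(N,i)} M(A_{ij}) log(M(A_{ij})/(F(i)-1)) equals log K(N). -/
def P (n k : ℕ) : ℕ := n.factorial / (n - k).factorial

def F (i : ℕ) : ℕ := ∑ k ∈ Finset.range (i + 1), P i k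

def K (N : ℕ) : ℕ := ∑ i ∈ Finset.Icc 1 N, P N i * (F i - 1)

lemma P_pos {n k : ℕ} (h : k ≤ n) : 0 < P n k := by
  unfold P
  exact Nat.div_pos (Nat.factorial_le (Nat.sub_le n k)) (Nat.factorial_pos _)

lemma F_ge_two {i : ℕ} (h : 1 ≤ i) : 2 ≤ F i := by
  unfold F
  have h2 : 2 ≤ i + 1 := by omega
  calc 2 = ∑ k ∈ Finset.range 2, 1 := by simp
    _ ≤ ∑ k ∈ Finset.range 2, P i k :=
        Finset.sum_le_sum (fun k hk => P_pos (by simp at hk; omega))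
    _ ≤ ∑ k ∈ Finset.range (i + 1), P i k :=
        Finset.sum_le_sum_of_subset (Finset.range_subset_range.2 h2)

lemma K_pos {N : ℕ} (hN : 1 ≤ N) : 0 < K N := by
  unfold K
  apply Finset.sum_pos
  · intro i hi
    simp only [Finset.mem_Icc] at hi
    have := P_pos hi.2
    have := F_ge_two hi.1
    exact Nat.mul_pos ‹0 < P N i› (by omega)
  · exact ⟨1, by simp [hN]⟩

/-- If the PMF M (indexed by length i and index j of the permutation event)
equals (F(i)-1)/K(N) on every permutation event of length i ≥ 1, then the RPS
entropy (with logarithm of any fixed base b > 1) equals log_b K(N). -/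
theorem RPS_entropy_of_maximizing_PMF (N : ℕ) (hN : 1 ≤ N) (b : ℝ) (hb : 1 < b)
    (M : ℕ → ℕ → ℝ)
    (hM : ∀ i ∈ Finset.Icc 1 N, ∀ j ∈ Finset.range (P N i),
      M i j = ((F i - 1 : ℕ) : ℝ) / (K N : ℝ)) :
    -∑ i ∈ Finset.Icc 1 N, ∑ j ∈ Finset.range (P N i),
        M i j * Real.logb b (M i j / ((F i - 1 : ℕ) : ℝ))
      = Real.logb b (K N : ℝ) := by
  have hK : (0:ℝ) < (K N : ℝ) := by exact_mod_cast K_pos hN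
  have hKne : (K N : ℝ) ≠ 0 := ne_of_gt hK
  have key : ∀ i ∈ Finset.Icc 1 N,
      ∑ j ∈ Finset.range (P N i), M i j * Real.logb b (M i j / ((F i - 1 : ℕ) : ℝ))
      = ((P N i * (F i - 1) : ℕ) : ℝ) / (K N : ℝ) * (- Real.logb b (K N : ℝ)) := by
    intro i hi
    have hF : (1:ℕ) ≤ F i - 1 := by
      have := F_ge_two (Finset.mem_Icc.1 hi).1; omega
    have hFne : ((F i - 1 : ℕ) : ℝ) ≠ 0 := by
      exact_mod_cast Nat.one_le_iff_ne_zero.1 hF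
    have hterm : ∀ j ∈ Finset.range (P N i),
        M i j * Real.logb b (M i j / ((F i - 1 : ℕ) : ℝ))
        = ((F i - 1 : ℕ) : ℝ) / (K N : ℝ) * (- Real.logb b (K N : ℝ)) := by
      intro j hj
      rw [hM i hi j hj]
      have : ((F i - 1 : ℕ) : ℝ) / (K N : ℝ) / ((F i - 1 : ℕ) : ℝ) = ((K N : ℝ))⁻¹ := by
        field_simp
      rw [this, Real.logb_inv]
    rw [Finset.sum_congr rfl hterm, Finset.sum_const, nsmul_eq_mul, Finset.card_range]
    push_cast
    ring
  rw [Finset.sum_congr rfl key]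
  rw [← Finset.sum_mul, ← Finset.sum_div]
  have : ∑ i ∈ Finset.Icc 1 N, ((P N i * (F i - 1) : ℕ) : ℝ) = (K N : ℝ) := by
    rw [← Nat.cast_sum]; rfl
  rw [this, div_self hKne, one_mul, neg_neg]
end

section
/- The maximum Deng entropy on an N-element frame is attained exactly at the mass function m(A) = (2^{|A|}-1)/∑_{B ⊆ Θ, B≠∅}(2^{|B|}-1) for nonempty A ⊆ Θ. -/
open Finset

/-- The maximum Deng entropy is attained exactly at
m(A) = (2^{|A|}-1) / ∑_{∅ ≠ B ⊆ Θ} (2^{|B|}-1). -/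
theorem max_Deng_entropy_iff (α : Type*) [Fintype α] [DecidableEq α]
    (m : Finset α → ℝ) (hm0 : ∀ A, 0 ≤ m A) (hme : m ∅ = 0)
    (hmsum : ∑ A ∈ Finset.univ.powerset, m A = 1) :
    (-∑ A ∈ Finset.univ.powerset.filter (· ≠ (∅ : Finset α)),
        m A * Real.log (m A / ((2 ^ A.card - 1 : ℕ) : ℝ))
      = Real.log ((∑ B ∈ Finset.univ.powerset.filter (· ≠ (∅ : Finset α)), (2 ^ B.card - 1 : ℕ) : ℝ)))
    ↔ ∀ A ∈ Finset.univ.powerset.filter (· ≠ (∅ : Finset α)),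
        m A = ((2 ^ A.card - 1 : ℕ) : ℝ)
          / ((∑ B ∈ Finset.univ.powerset.filter (· ≠ (∅ : Finset α)), (2 ^ B.card - 1 : ℕ) : ℝ)) := by
  classical
  set S := Finset.univ.powerset.filter (· ≠ (∅ : Finset α)) with hS
  have hmsumS : ∑ A ∈ S, m A = 1 := by
    rw [hS, Finset.filter_ne']
    rwa [← Finset.add_sum_erase _ m (Finset.empty_mem_powerset _), hme, zero_add] at hmsum
  have hSne : S.Nonempty := by
    rcases Finset.eq_empty_or_nonempty S with h | h
    · rw [h, Finset.sum_empty] at hmsumS; norm_num at hmsumS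
    · exact h
  have hwpos : ∀ A ∈ S, (0:ℝ) < ((2 ^ A.card - 1 : ℕ) : ℝ) := by
    intro A hA
    rw [hS, Finset.mem_filter] at hA
    have hc : 1 ≤ A.card := Finset.card_pos.2 (Finset.nonempty_iff_ne_empty.2 hA.2)
    have h2 : 2 ≤ 2 ^ A.card := by
      calc 2 = 2 ^ 1 := rfl
        _ ≤ 2 ^ A.card := Nat.pow_le_pow_right (by norm_num) hc
    have h3 : 0 < 2 ^ A.card - 1 := by omega
    exact_mod_cast h3
  set W : ℝ := ((∑ B ∈ S, (2 ^ B.card - 1 : ℕ)) : ℝ) with hWdef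
  have hWsum : W = ∑ B ∈ S, ((2 ^ B.card - 1 : ℕ) : ℝ) := hWdef
  have hWpos : 0 < W := by
    rw [hWsum]; exact Finset.sum_pos hwpos hSne
  set f : Finset α → ℝ :=
    fun A => m A * Real.log (((2 ^ A.card - 1 : ℕ) : ℝ) / (W * m A)) with hfdef
  have key : ∀ A ∈ S, f A ≤ ((2 ^ A.card - 1 : ℕ) : ℝ) / W - m A := by
    intro A hA
    have hw := hwpos A hA
    rcases eq_or_lt_of_le (hm0 A) with h0 | h0
    · simp only [hfdef, ← h0, zero_mul, mul_zero, sub_zero]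
      exact le_of_lt (div_pos hw hWpos)
    · have hx : 0 < ((2 ^ A.card - 1 : ℕ) : ℝ) / (W * m A) :=
        div_pos hw (mul_pos hWpos h0)
      have hlog := Real.log_le_sub_one_of_pos hx
      calc f A ≤ m A * (((2 ^ A.card - 1 : ℕ) : ℝ) / (W * m A) - 1) :=
            mul_le_mul_of_nonneg_left hlog (le_of_lt h0)
        _ = ((2 ^ A.card - 1 : ℕ) : ℝ) / W - m A := by
            field_simp
  have hsumbound : ∑ A ∈ S, (((2 ^ A.card - 1 : ℕ) : ℝ) / W - m A) = 0 := by
    rw [Finset.sum_sub_distrib, hmsumS, ← Finset.sum_div, ← hWsum,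
      div_self (ne_of_gt hWpos)]
    ring
  have hterm : ∀ A ∈ S,
      f A = -(m A * Real.log (m A / ((2 ^ A.card - 1 : ℕ) : ℝ))) - m A * Real.log W := by
    intro A hA
    have hw := hwpos A hA
    rcases eq_or_lt_of_le (hm0 A) with h0 | h0
    · simp [hfdef, ← h0]
    · simp only [hfdef]
      rw [Real.log_div (ne_of_gt hw) (ne_of_gt (mul_pos hWpos h0)),
        Real.log_div (ne_of_gt h0) (ne_of_gt hw),
        Real.log_mul (ne_of_gt hWpos) (ne_of_gt h0)]
      ring
  have hrel : ∑ A ∈ S, f A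
      = (-∑ A ∈ S, m A * Real.log (m A / ((2 ^ A.card - 1 : ℕ) : ℝ))) - Real.log W := by
    rw [Finset.sum_congr rfl hterm, Finset.sum_sub_distrib, ← Finset.sum_mul, hmsumS,
      one_mul, Finset.sum_neg_distrib]
  constructor
  · intro hE
    have h0 : ∑ A ∈ S, f A = ∑ A ∈ S, (((2 ^ A.card - 1 : ℕ) : ℝ) / W - m A) := by
      rw [hrel, hE, hsumbound]; ring
    have hall := (Finset.sum_eq_sum_iff_of_le key).1 h0
    intro A hA
    have heq := hall A hA
    have hw := hwpos A hA
    rcases eq_or_lt_of_le (hm0 A) with h0' | h0'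
    · exfalso
      simp only [hfdef, ← h0', zero_mul, mul_zero, sub_zero] at heq
      have hpos : 0 < ((2 ^ A.card - 1 : ℕ) : ℝ) / W := div_pos hw hWpos
      linarith
    · have hx1 : ((2 ^ A.card - 1 : ℕ) : ℝ) / (W * m A) = 1 := by
        by_contra hne
        have hxpos : 0 < ((2 ^ A.card - 1 : ℕ) : ℝ) / (W * m A) :=
          div_pos hw (mul_pos hWpos h0')
        have hlt := Real.log_lt_sub_one_of_pos hxpos hne
        have hlt2 : f A < ((2 ^ A.card - 1 : ℕ) : ℝ) / W - m A := by
          simp only [hfdef]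
          calc m A * Real.log (((2 ^ A.card - 1 : ℕ) : ℝ) / (W * m A)) < m A * (((2 ^ A.card - 1 : ℕ) : ℝ) / (W * m A) - 1) :=
                (mul_lt_mul_iff_right₀ h0').2 hlt
            _ = ((2 ^ A.card - 1 : ℕ) : ℝ) / W - m A := by
                field_simp
        linarith
      have hWm : ((2 ^ A.card - 1 : ℕ) : ℝ) = W * m A :=
        (div_eq_one_iff_eq (ne_of_gt (mul_pos hWpos h0'))).1 hx1
      rw [eq_div_iff (ne_of_gt hWpos)]
      linarith
  · intro hmeq
    have : ∀ A ∈ S, m A * Real.log (m A / ((2 ^ A.card - 1 : ℕ) : ℝ))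
        = m A * (-Real.log W) := by
      intro A hA
      have hw := hwpos A hA
      rw [hmeq A hA]
      congr 1
      rw [div_right_comm, div_self (ne_of_gt hw), one_div, Real.log_inv]
    rw [Finset.sum_congr rfl this, ← Finset.sum_mul, hmsumS, one_mul, neg_neg]
end

section
/- For every N ≥ 2, log(∑_{i=1}^{N} P(N,i)(F(i)-1)) > log(∑_{i=1}^{N} C(N,i)(2^i-1)) > log N; that is, maximum RPS entropy strictly exceeds maximum Deng entropy, which strictly exceeds maximum Shannon entropy. -/
lemma P_eq {n k : ℕ} (h : k ≤ n) : P n k = n.descFactorial k :=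
  (Nat.descFactorial_eq_div h).symm

lemma choose_le_P {n k : ℕ} (h : k ≤ n) : n.choose k ≤ P n k := by
  rw [P_eq h, Nat.descFactorial_eq_factorial_mul_choose]
  exact Nat.le_mul_of_pos_left _ (Nat.factorial_pos _)

lemma two_pow_le_F (i : ℕ) : 2 ^ i ≤ F i := by
  rw [← Nat.sum_range_choose i]
  exact Finset.sum_le_sum fun k hk => choose_le_P (Nat.lt_succ_iff.mp (Finset.mem_range.mp hk))

/-- For N ≥ 2: max RPS entropy > max Deng entropy > max Shannon entropy. -/
theorem max_entropies_strict_chain (N : ℕ) (hN : 2 ≤ N) :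
    Real.log ((∑ i ∈ Finset.Icc 1 N, P N i * (F i - 1) : ℕ) : ℝ)
      > Real.log ((∑ i ∈ Finset.Icc 1 N, N.choose i * (2 ^ i - 1 : ℕ) : ℕ) : ℝ) ∧
    Real.log ((∑ i ∈ Finset.Icc 1 N, N.choose i * (2 ^ i - 1 : ℕ) : ℕ) : ℝ)
      > Real.log (N : ℝ) := by
  have h1 : (1 : ℕ) ∈ Finset.Icc 1 N := Finset.mem_Icc.mpr ⟨le_refl 1, le_trans (by norm_num) hN⟩
  have h2 : (2 : ℕ) ∈ Finset.Icc 1 N := Finset.mem_Icc.mpr ⟨by norm_num, hN⟩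
  have hC2 : 0 < N.choose 2 := Nat.choose_pos hN
  -- second sum > N
  have hS2 : N < ∑ i ∈ Finset.Icc 1 N, N.choose i * (2 ^ i - 1 : ℕ) := by
    have := Finset.single_lt_sum (f := fun i => N.choose i * (2 ^ i - 1 : ℕ))
      (by norm_num : (2:ℕ) ≠ 1) h1 h2 (Nat.mul_pos hC2 (by norm_num)) (fun k _ _ => Nat.zero_le _)
    simpa using this
  -- first sum > second sum
  have hS1 : (∑ i ∈ Finset.Icc 1 N, N.choose i * (2 ^ i - 1 : ℕ))
      < ∑ i ∈ Finset.Icc 1 N, P N i * (F i - 1) := by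
    refine Finset.sum_lt_sum (fun i hi => ?_) ⟨2, h2, ?_⟩
    · have hiN : i ≤ N := (Finset.mem_Icc.mp hi).2
      exact Nat.mul_le_mul (choose_le_P hiN) (Nat.sub_le_sub_right (two_pow_le_F i) 1)
    · have hP : P N 2 = 2 * N.choose 2 := by
        rw [P_eq hN, Nat.descFactorial_eq_factorial_mul_choose]; norm_num [Nat.factorial]
      have hF : 4 ≤ F 2 - 1 := by
        have : 2 ^ 2 ≤ F 2 := two_pow_le_F 2
        have hF2 : F 2 = 5 := by decide
        omega
      calc N.choose 2 * (2 ^ 2 - 1) = N.choose 2 * 3 := by norm_num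
        _ < 2 * N.choose 2 * 4 := by nlinarith
        _ ≤ P N 2 * (F 2 - 1) := by rw [hP]; exact Nat.mul_le_mul_left _ hF
  have hNpos : (0 : ℝ) < N := by exact_mod_cast Nat.lt_of_lt_of_le (by norm_num) hN
  constructor
  · exact Real.log_lt_log (lt_trans hNpos (by exact_mod_cast hS2)) (by exact_mod_cast hS1)
  · exact Real.log_lt_log hNpos (by exact_mod_cast hS2)
end
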